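/- Let 0 < r < r′. Let T be a geodesic triangle on the sphere S_r with angles θ₁, θ₂, θ₃, and suppose T′ is a geodesic triangle on the sphere S_{r′} with the same three side lengths as T, with corresponding angles θ₁′, θ₂′, θ₃′ (opposite sides of equal length). Then θᵢ > θᵢ′ for each i ∈ {1,2,3}. -/

import Mathlib

/-!
Measured in units of the radius, the triangle on `S_r` has central angles `α, β, γ` as sides
and the triangle on `S_{r'}` has sides `l α, l β, l γ` with `l = r / r' < 1`. By the spherical
law of cosines the angle opposite `α` has cosine `(cos α - cos β cos γ) / (sin β sin γ)`.
Nondegeneracy forces the triangle inequalities, so `α = v + w`, `β = u + v`, `γ = u + w` with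
`u, v, w > 0` and `u + v + w < π`, and then the half-angle formula turns this cosine into
`1 - 2 (sin v / sin (u + v)) (sin w / sin (u + w))`. As `x ↦ sin (l x) / sin x` is strictly
increasing on `(0, π)`, both ratios strictly drop when all sides are scaled by `l`: the cosine
grows, so the angle shrinks.
-/

noncomputable section

/-- Points of ℝ³. -/
abbrev E3 := EuclideanSpace ℝ (Fin 3)

/-- Points of the Euclidean plane. -/
abbrev E2 := EuclideanSpace ℝ (Fin 2)

/-- `p` lies on the sphere `S_r` of radius `r` centered at the origin in ℝ³. -/
def onSphere (r : ℝ) (p : E3) : Prop := ‖p‖ = r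

/-- Geodesic (great-circle) distance on the sphere of radius `r`:
`d_r(p,q) = r · arccos(⟪p,q⟫ / r²)`. -/
def sdist (r : ℝ) (p q : E3) : ℝ := r * Real.arccos ((inner ℝ p q : ℝ) / r ^ 2)

/-- The tangent vector at `p` pointing along the minimal geodesic arc from `p`
towards `q` (the component of `q` orthogonal to `p`). -/
def sTangent (p q : E3) : E3 := q - (((inner ℝ q p : ℝ)) / ‖p‖ ^ 2) • p

/-- The spherical angle at vertex `v` between the minimal geodesic arcs `vp` and `vq`,
i.e. the angle between the tangent directions of the two arcs at `v`; it lies in `[0, π]`. -/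
def sAngle (p v q : E3) : ℝ :=
  InnerProductGeometry.angle (sTangent v p) (sTangent v q)

/-- A geodesic triangle on the sphere of radius `r`: three vertices on the sphere,
pairwise neither equal nor antipodal, and not all lying on one great circle
(equivalently, linearly independent in ℝ³). -/
def SphTriangle (r : ℝ) (a b c : E3) : Prop :=
  onSphere r a ∧ onSphere r b ∧ onSphere r c ∧
  a ≠ b ∧ a ≠ c ∧ b ≠ c ∧ a ≠ -b ∧ a ≠ -c ∧ b ≠ -c ∧
  LinearIndependent ℝ ![a, b, c]

open Real Set InnerProductGeometry
open scoped RealInnerProductSpace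

theorem mul_mem_Ioo_zero_pi {l x : ℝ} (hl : l ∈ Ioo 0 1) (hx : x ∈ Ioo 0 π) :
    l * x ∈ Ioo 0 π :=
  ⟨mul_pos hl.1 hx.1, (mul_lt_of_lt_one_left hx.1 hl.2).trans hx.2⟩

theorem sin_mul_mul_cos_lt_mul_cos_mul_mul_sin {l x : ℝ} (hl : l ∈ Ioo 0 1)
    (hx : x ∈ Ioc 0 π) : sin (l * x) * cos x < l * cos (l * x) * sin x := by
  set N : ℝ → ℝ := fun x ↦ l * cos (l * x) * sin x - sin (l * x) * cos x
  have hN : ∀ x, HasDerivAt N ((1 - l ^ 2) * (sin (l * x) * sin x)) x := fun x ↦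
    ((((hasDerivAt_const_mul l).cos.const_mul l).mul (hasDerivAt_sin x)).sub
      ((hasDerivAt_const_mul l).sin.mul (hasDerivAt_cos x))).congr_deriv (by ring)
  have hmono : StrictMonoOn N (Icc 0 π) := by
    refine strictMonoOn_of_deriv_pos (convex_Icc 0 π)
      (fun x _ ↦ (hN x).continuousAt.continuousWithinAt) fun x hx ↦ ?_
    rw [interior_Icc] at hx
    have hsin_lx := sin_pos_of_mem_Ioo (mul_mem_Ioo_zero_pi hl hx)
    have hsin_x := sin_pos_of_mem_Ioo hx
    have hl2 : 0 < 1 - l ^ 2 := by nlinarith [hl.1, hl.2]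
    rw [(hN x).deriv]
    positivity
  have hN0 := hmono ⟨le_rfl, pi_pos.le⟩ ⟨hx.1.le, hx.2⟩ hx.1
  simp only [N, mul_zero, sin_zero, cos_zero] at hN0
  linarith

theorem strictMonoOn_sin_mul_div_sin {l : ℝ} (hl : l ∈ Ioo 0 1) :
    StrictMonoOn (fun x ↦ sin (l * x) / sin x) (Ioo 0 π) := by
  have hd : ∀ x ∈ Ioo 0 π, HasDerivAt (fun x ↦ sin (l * x) / sin x)
      ((l * cos (l * x) * sin x - sin (l * x) * cos x) / sin x ^ 2) x := fun x hx ↦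
    ((hasDerivAt_const_mul l).sin.div (hasDerivAt_sin x)
      (sin_pos_of_mem_Ioo hx).ne').congr_deriv (by ring)
  refine strictMonoOn_of_deriv_pos (convex_Ioo 0 π)
    (fun x hx ↦ (hd x hx).continuousAt.continuousWithinAt) fun x hx ↦ ?_
  rw [interior_Ioo] at hx
  rw [(hd x hx).deriv]
  have hnum := sin_mul_mul_cos_lt_mul_cos_mul_mul_sin hl ⟨hx.1, hx.2.le⟩
  have hsin_x := sin_pos_of_mem_Ioo hx
  exact div_pos (by linarith) (by positivity)

theorem sin_mul_div_sin_mul_lt_sin_div_sin {l x y : ℝ} (hl : l ∈ Ioo 0 1) (hx : 0 < x)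
    (hxy : x < y) (hy : y < π) : sin (l * x) / sin (l * y) < sin x / sin y := by
  have hx' : x ∈ Ioo 0 π := ⟨hx, hxy.trans hy⟩
  have hy' : y ∈ Ioo 0 π := ⟨hx.trans hxy, hy⟩
  have hmono := strictMonoOn_sin_mul_div_sin hl hx' hy' hxy
  rw [div_lt_div_iff₀ (sin_pos_of_mem_Ioo hx') (sin_pos_of_mem_Ioo hy')] at hmono
  rw [div_lt_div_iff₀ (sin_pos_of_mem_Ioo (mul_mem_Ioo_zero_pi hl hy'))
    (sin_pos_of_mem_Ioo hy')]
  linarith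

theorem abs_cos_lt_one_of_mem_Ioo {x : ℝ} (hx : x ∈ Ioo 0 π) : |cos x| < 1 :=
  (sq_lt_one_iff_abs_lt_one _).1 (by nlinarith [sin_sq_add_cos_sq x, sin_pos_of_mem_Ioo hx])

/-- The cosine of the angle opposite the side `α` of a spherical triangle with sides `α, β, γ`
on the unit sphere, by the spherical law of cosines. -/
def sphericalCos (α β γ : ℝ) : ℝ := (cos α - cos β * cos γ) / (sin β * sin γ)

theorem sphericalCos_add_add {u v w : ℝ} (hv : sin (u + v) ≠ 0) (hw : sin (u + w) ≠ 0) :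
    sphericalCos (v + w) (u + v) (u + w)
      = 1 - 2 * (sin v / sin (u + v)) * (sin w / sin (u + w)) := by
  rw [sphericalCos]
  field_simp
  simp only [cos_add, sin_add]
  linear_combination (-cos v * cos w - sin v * sin w) * sin_sq_add_cos_sq u

theorem triangle_ineq_of_abs_sphericalCos_lt_one {α β γ : ℝ} (hα : α ∈ Icc 0 π)
    (hβ : β ∈ Ioo 0 π) (hγ : γ ∈ Ioo 0 π) (h : |sphericalCos α β γ| < 1) :
    |β - γ| < α ∧ α < β + γ ∧ α + β + γ < 2 * π := by
  have hsin : 0 < sin β * sin γ := mul_pos (sin_pos_of_mem_Ioo hβ) (sin_pos_of_mem_Ioo hγ)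
  rw [sphericalCos, abs_div, abs_of_pos hsin, div_lt_one hsin, abs_lt] at h
  have hlt : cos (β + γ) < cos α := by rw [cos_add]; linarith
  have hgt : cos α < cos |β - γ| := by rw [cos_abs, cos_sub]; linarith
  obtain ⟨hβ0, hβπ⟩ := hβ
  obtain ⟨hγ0, hγπ⟩ := hγ
  refine ⟨?_, ?_, ?_⟩
  · by_contra! hle
    exact hgt.not_ge
      (cos_le_cos_of_nonneg_of_le_pi hα.1 (abs_le.2 ⟨by linarith, by linarith⟩) hle)
  · by_contra! hle
    exact hlt.not_ge (cos_le_cos_of_nonneg_of_le_pi (by linarith) hα.2 hle)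
  · by_contra! hle
    have hcos := cos_le_cos_of_nonneg_of_le_pi (by linarith) hα.2
      (by linarith : 2 * π - (β + γ) ≤ α)
    rw [cos_two_pi_sub] at hcos
    exact hlt.not_ge hcos

theorem sphericalCos_lt_sphericalCos_mul {α β γ l : ℝ} (hl : l ∈ Ioo 0 1)
    (hα : α ∈ Icc 0 π) (hβ : β ∈ Ioo 0 π) (hγ : γ ∈ Ioo 0 π) (h : |sphericalCos α β γ| < 1) :
    sphericalCos α β γ < sphericalCos (l * α) (l * β) (l * γ) := by
  obtain ⟨hβγ, hαβγ, hsum⟩ := triangle_ineq_of_abs_sphericalCos_lt_one hα hβ hγ h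
  rw [abs_sub_lt_iff] at hβγ
  obtain ⟨u, v, w, hu, hv, hw, hs, rfl, rfl, rfl⟩ : ∃ u v w : ℝ, 0 < u ∧ 0 < v ∧ 0 < w ∧
      u + v + w < π ∧ α = v + w ∧ β = u + v ∧ γ = u + w :=
    ⟨(β + γ - α) / 2, (α + β - γ) / 2, (α + γ - β) / 2, by linarith, by linarith, by linarith,
      by linarith, by ring, by ring, by ring⟩
  have hlv := sin_pos_of_mem_Ioo (mul_mem_Ioo_zero_pi hl ⟨hv, by linarith⟩)
  have hlw := sin_pos_of_mem_Ioo (mul_mem_Ioo_zero_pi hl ⟨hw, by linarith⟩)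
  have hluv := sin_pos_of_mem_Ioo (mul_mem_Ioo_zero_pi hl hβ)
  have hluw := sin_pos_of_mem_Ioo (mul_mem_Ioo_zero_pi hl hγ)
  rw [mul_add, mul_add, mul_add,
    sphericalCos_add_add (sin_pos_of_mem_Ioo hβ).ne' (sin_pos_of_mem_Ioo hγ).ne',
    sphericalCos_add_add (by rw [← mul_add]; exact hluv.ne')
      (by rw [← mul_add]; exact hluw.ne'),
    ← mul_add, ← mul_add]
  have hratios := mul_lt_mul''
    (sin_mul_div_sin_mul_lt_sin_div_sin hl hv (by linarith : v < u + v) hβ.2)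
    (sin_mul_div_sin_mul_lt_sin_div_sin hl hw (by linarith : w < u + w) hγ.2)
    (by positivity) (by positivity)
  linarith

theorem angle_mem_Ioo_of_linearIndependent {V : Type*} [NormedAddCommGroup V]
    [InnerProductSpace ℝ V] {x y : V} (h : LinearIndependent ℝ ![x, y]) :
    angle x y ∈ Ioo 0 π := by
  have hnot_parallel : ∀ t : ℝ, y ≠ t • x := fun t hyx ↦ by
    simpa using LinearIndependent.pair_iff.1 h t (-1) (by rw [hyx]; module)
  refine ⟨(angle_nonneg x y).lt_of_ne' fun h0 ↦ ?_, (angle_le_pi x y).lt_of_ne fun hπ ↦ ?_⟩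
  · obtain ⟨-, t, -, ht⟩ := angle_eq_zero_iff.1 h0
    exact hnot_parallel t ht
  · obtain ⟨-, t, -, ht⟩ := angle_eq_pi_iff.1 hπ
    exact hnot_parallel t ht

theorem LinearIndependent.pair_sub_smul {R M : Type*} [CommRing R] [AddCommGroup M]
    [Module R M] {a b c : M} (h : LinearIndependent R ![a, b, c]) (s t : R) :
    LinearIndependent R ![b - s • a, c - t • a] := by
  rw [LinearIndependent.pair_iff]
  intro x y hxy
  have hzero := Fintype.linearIndependent_iff.1 h ![-(x * s + y * t), x, y] (by
    simp only [Fin.sum_univ_three, Fin.isValue, Matrix.cons_val_zero, Matrix.cons_val_one,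
      Matrix.cons_val]
    rw [← hxy]
    module)
  exact ⟨hzero 1, hzero 2⟩

theorem onSphere.ne_zero {r : ℝ} {p : E3} (hp : onSphere r p) (hr : 0 < r) : p ≠ 0 := by
  rintro rfl
  rw [onSphere, norm_zero] at hp
  exact hr.ne hp

theorem sdist_comm (r : ℝ) (p q : E3) : sdist r p q = sdist r q p := by
  rw [sdist, sdist, real_inner_comm]

theorem sdist_eq_mul_angle {r : ℝ} {p q : E3} (hp : onSphere r p) (hq : onSphere r q) :
    sdist r p q = r * angle p q := by
  rw [sdist, angle, hp, hq, sq]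

theorem inner_sTangent {a : E3} (ha : a ≠ 0) (b c : E3) :
    ⟪sTangent a b, sTangent a c⟫ = ⟪b, c⟫ - ⟪a, b⟫ * ⟪a, c⟫ / ‖a‖ ^ 2 := by
  have : ‖a‖ ≠ 0 := norm_ne_zero_iff.2 ha
  simp only [sTangent, inner_sub_left, inner_sub_right, real_inner_smul_left,
    real_inner_smul_right, real_inner_self_eq_norm_sq, real_inner_comm a]
  field_simp
  ring

theorem norm_sTangent {a : E3} (ha : a ≠ 0) (b : E3) :
    ‖sTangent a b‖ = ‖b‖ * sin (angle a b) := by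
  have : ‖a‖ ≠ 0 := norm_ne_zero_iff.2 ha
  refine (sq_eq_sq₀ (norm_nonneg _) (mul_nonneg (norm_nonneg _) (sin_angle_nonneg a b))).1 ?_
  rw [← real_inner_self_eq_norm_sq, inner_sTangent ha, real_inner_self_eq_norm_sq,
    ← cos_angle_mul_norm_mul_norm, mul_pow, sin_sq]
  field_simp

theorem cos_sAngle {a b c : E3} (ha : a ≠ 0) (hb : b ≠ 0) (hc : c ≠ 0) :
    cos (sAngle b a c) = sphericalCos (angle b c) (angle a b) (angle a c) := by
  have : ‖a‖ ≠ 0 := norm_ne_zero_iff.2 ha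
  have hbc : ‖b‖ * ‖c‖ ≠ 0 := mul_ne_zero (norm_ne_zero_iff.2 hb) (norm_ne_zero_iff.2 hc)
  have hinner : ⟪sTangent a b, sTangent a c⟫
      = ‖b‖ * ‖c‖ * (cos (angle b c) - cos (angle a b) * cos (angle a c)) := by
    rw [inner_sTangent ha, ← cos_angle_mul_norm_mul_norm b c, ← cos_angle_mul_norm_mul_norm a b,
      ← cos_angle_mul_norm_mul_norm a c]
    field_simp
  rw [sAngle, cos_angle, hinner, norm_sTangent ha, norm_sTangent ha, sphericalCos,
    mul_mul_mul_comm, mul_div_mul_left _ _ hbc]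

theorem sAngle_mem_Icc (p v q : E3) : sAngle p v q ∈ Icc 0 π :=
  ⟨angle_nonneg _ _, angle_le_pi _ _⟩

theorem sAngle_lt_sAngle_of_sdist_eq {r r' : ℝ} (hr : 0 < r) (hrr' : r < r')
    {a b c a' b' c' : E3} (ha : onSphere r a) (hb : onSphere r b) (hc : onSphere r c)
    (ha' : onSphere r' a') (hb' : onSphere r' b') (hc' : onSphere r' c')
    (hli : LinearIndependent ℝ ![a, b, c]) (hbc : sdist r b c = sdist r' b' c')
    (hab : sdist r a b = sdist r' a' b') (hac : sdist r a c = sdist r' a' c') :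
    sAngle b' a' c' < sAngle b a c := by
  have hr' : 0 < r' := hr.trans hrr'
  have hl : r / r' ∈ Ioo 0 1 := ⟨div_pos hr hr', (div_lt_one hr').2 hrr'⟩
  have hscale : ∀ {p q p' q' : E3}, onSphere r p → onSphere r q → onSphere r' p' →
      onSphere r' q' → sdist r p q = sdist r' p' q' → angle p' q' = r / r' * angle p q := by
    intro p q p' q' hp hq hp' hq' h
    rw [sdist_eq_mul_angle hp hq, sdist_eq_mul_angle hp' hq'] at h
    field_simp
    linarith
  have hab_li : LinearIndependent ℝ ![a, b] := by
    convert hli.comp ![0, 1] (by decide) using 1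
    ext i; fin_cases i <;> rfl
  have hac_li : LinearIndependent ℝ ![a, c] := by
    convert hli.comp ![0, 2] (by decide) using 1
    ext i; fin_cases i <;> rfl
  refine (strictAntiOn_cos.lt_iff_gt (sAngle_mem_Icc b a c) (sAngle_mem_Icc b' a' c')).1 ?_
  rw [cos_sAngle (ha.ne_zero hr) (hb.ne_zero hr) (hc.ne_zero hr),
    cos_sAngle (ha'.ne_zero hr') (hb'.ne_zero hr') (hc'.ne_zero hr'),
    hscale hb hc hb' hc' hbc, hscale ha hb ha' hb' hab, hscale ha hc ha' hc' hac]
  refine sphericalCos_lt_sphericalCos_mul hl ⟨angle_nonneg b c, angle_le_pi b c⟩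
    (angle_mem_Ioo_of_linearIndependent hab_li) (angle_mem_Ioo_of_linearIndependent hac_li) ?_
  rw [← cos_sAngle (ha.ne_zero hr) (hb.ne_zero hr) (hc.ne_zero hr)]
  exact abs_cos_lt_one_of_mem_Ioo (angle_mem_Ioo_of_linearIndependent (hli.pair_sub_smul _ _))

/-- **Lemma 6**: every angle of a geodesic triangle strictly decreases when the triangle
is redrawn, with the same three side lengths, on a larger sphere.  Here `T = △abc` lies
on the sphere `S_r` and `T' = △a'b'c'` lies on `S_{r'}` with `r < r'`, with sides of
equal length corresponding to each other. -/
theorem triangle_angles_shrink_on_larger_sphere (r r' : ℝ) (hr : 0 < r) (hrr' : r < r')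
    (a b c a' b' c' : E3)
    (htri : SphTriangle r a b c) (htri' : SphTriangle r' a' b' c')
    (hbc : sdist r b c = sdist r' b' c')
    (hab : sdist r a b = sdist r' a' b')
    (hac : sdist r a c = sdist r' a' c') :
    sAngle b a c > sAngle b' a' c' ∧
    sAngle a b c > sAngle a' b' c' ∧
    sAngle a c b > sAngle a' c' b' := by
  obtain ⟨ha, hb, hc, -, -, -, -, -, -, hli⟩ := htri
  obtain ⟨ha', hb', hc', -⟩ := htri'
  have hli_bac : LinearIndependent ℝ ![b, a, c] := by
    convert hli.comp ![1, 0, 2] (by decide) using 1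
    ext i; fin_cases i <;> rfl
  have hli_cab : LinearIndependent ℝ ![c, a, b] := by
    convert hli.comp ![2, 0, 1] (by decide) using 1
    ext i; fin_cases i <;> rfl
  refine ⟨sAngle_lt_sAngle_of_sdist_eq hr hrr' ha hb hc ha' hb' hc' hli hbc hab hac,
    sAngle_lt_sAngle_of_sdist_eq hr hrr' hb ha hc hb' ha' hc' hli_bac hac ?_ hbc,
    sAngle_lt_sAngle_of_sdist_eq hr hrr' hc ha hb hc' ha' hb' hli_cab hab ?_ ?_⟩
  · rw [sdist_comm, hab, sdist_comm]
  · rw [sdist_comm, hac, sdist_comm]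
  · rw [sdist_comm, hbc, sdist_comm]
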